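/- If G' is an ε-approximation of a connected network G (i.e., for all z ∈ ℝⁿ, (1/(1+ε)) zᵀ L_G z ≤ zᵀ L_{G'} z ≤ (1+ε) zᵀ L_G z with both Laplacians having kernel spanned by the all-ones vector), then for all z ∈ ℝⁿ, (1/(1+ε)) zᵀ L_G^# z ≤ zᵀ L_{G'}^# z ≤ (1+ε) zᵀ L_G^# z. -/

import Mathlib

/-!
Write `P = L L^#`. Since `L` is symmetric, so is `L^#` (by uniqueness of group inverses), and `P`
is the orthogonal projection onto `(ker L)ᗮ`; as `ker L = ker L'`, also `L' L'^# = P`.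
For symmetric positive semidefinite `A` with group inverse `X`, the quadratic form of `X` is the
Legendre transform of that of `A` on the range of `P`:
`zᵀ X z = max_y (2 yᵀ P z - yᵀ A y)`, attained at `y = X z`.
Hence `zᵀ L'^# z ≤ c zᵀ L^# z` whenever `yᵀ L y ≤ c yᵀ L' y` for all `y`, and both bounds follow.
-/

open Matrix

structure IsGroupInverse {M : Type*} [Mul M] (a x : M) : Prop where
  mul_mul_self : a * x * a = a
  self_mul_mul : x * a * x = x
  commute : a * x = x * a

theorem IsGroupInverse.unique {M : Type*} [Semigroup M] {a x y : M}
    (hx : IsGroupInverse a x) (hy : IsGroupInverse a y) : x = y := by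
  have h₁ : x * a = x * a * (y * a) := by
    conv_lhs => rw [← hy.mul_mul_self]
    simp only [mul_assoc]
  have h₂ : y * a = x * a * (y * a) := by
    conv_lhs => rw [← hy.commute, ← hx.mul_mul_self]
    rw [hx.commute, mul_assoc (x * a), hy.commute]
  have hxa : x * a = y * a := h₁.trans h₂.symm
  have hax : a * x = a * y := by rw [hx.commute, hxa, hy.commute]
  calc x = x * (a * y) := by rw [← hax, ← mul_assoc, hx.self_mul_mul]
    _ = y := by rw [← mul_assoc, hxa, hy.self_mul_mul]

namespace Matrix

variable {m R : Type*} [Fintype m] [CommRing R]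

theorem IsSymm.dotProduct_mulVec_comm {A : Matrix m m R} (hA : A.IsSymm) (v w : m → R) :
    v ⬝ᵥ A *ᵥ w = A *ᵥ v ⬝ᵥ w := by
  rw [dotProduct_mulVec, ← mulVec_transpose, hA.eq]

theorem mul_eq_left_of_isIdempotentElem {P Q : Matrix m m R} (hQ : IsIdempotentElem Q)
    (hker : ∀ v, Q *ᵥ v = 0 → P *ᵥ v = 0) : P * Q = P := by
  refine ext_iff_mulVec.mpr fun v => ?_
  have hQv : Q *ᵥ (v - Q *ᵥ v) = 0 := by
    rw [mulVec_sub, mulVec_mulVec, hQ.eq, sub_self]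
  rw [← mulVec_mulVec, eq_comm, ← sub_eq_zero, ← mulVec_sub, hker _ hQv]

theorem IsSymm.eq_of_isIdempotentElem {P Q : Matrix m m R} (hPs : P.IsSymm) (hQs : Q.IsSymm)
    (hP : IsIdempotentElem P) (hQ : IsIdempotentElem Q) (hker : ∀ v, P *ᵥ v = 0 ↔ Q *ᵥ v = 0) :
    P = Q := by
  have hPQ := mul_eq_left_of_isIdempotentElem hQ fun v => (hker v).mpr
  have hQP := mul_eq_left_of_isIdempotentElem hP fun v => (hker v).mp
  rw [← hPs.eq, ← hPQ, transpose_mul, hPs.eq, hQs.eq, hQP]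

end Matrix

namespace IsGroupInverse

section CommRing

variable {m R : Type*} [Fintype m] [CommRing R] {A X : Matrix m m R}

theorem transpose (h : IsGroupInverse A X) : IsGroupInverse Aᵀ Xᵀ where
  mul_mul_self := by rw [← transpose_mul, ← transpose_mul, ← mul_assoc, h.mul_mul_self]
  self_mul_mul := by rw [← transpose_mul, ← transpose_mul, ← mul_assoc, h.self_mul_mul]
  commute := by rw [← transpose_mul, ← transpose_mul, h.commute]

theorem isSymm (hA : A.IsSymm) (h : IsGroupInverse A X) : X.IsSymm :=
  (hA.eq ▸ h.transpose).unique h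

theorem isSymm_mul (hA : A.IsSymm) (h : IsGroupInverse A X) : (A * X).IsSymm := by
  rw [IsSymm, transpose_mul, (h.isSymm hA).eq, hA.eq, h.commute]

theorem isIdempotentElem_mul (h : IsGroupInverse A X) : IsIdempotentElem (A * X) := by
  rw [IsIdempotentElem, ← mul_assoc, h.mul_mul_self]

theorem mul_mulVec_eq_zero_iff (h : IsGroupInverse A X) (v : m → R) :
    (A * X) *ᵥ v = 0 ↔ A *ᵥ v = 0 := by
  constructor
  · intro hv
    rw [← h.mul_mul_self, mul_assoc, ← h.commute, ← mulVec_mulVec, hv, mulVec_zero]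
  · intro hv
    rw [h.commute, ← mulVec_mulVec, hv, mulVec_zero]

theorem mul_eq_mul_of_ker_eq {B Y : Matrix m m R} (hA : A.IsSymm) (hB : B.IsSymm)
    (hX : IsGroupInverse A X) (hY : IsGroupInverse B Y) (hker : ∀ v, A *ᵥ v = 0 ↔ B *ᵥ v = 0) :
    A * X = B * Y :=
  (hX.isSymm_mul hA).eq_of_isIdempotentElem (hY.isSymm_mul hB) hX.isIdempotentElem_mul
    hY.isIdempotentElem_mul fun v => by
      rw [hX.mul_mulVec_eq_zero_iff, hY.mul_mulVec_eq_zero_iff, hker]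

theorem mulVec_dotProduct_mulVec_mulVec (hA : A.IsSymm) (h : IsGroupInverse A X) (z : m → R) :
    X *ᵥ z ⬝ᵥ A *ᵥ (X *ᵥ z) = z ⬝ᵥ X *ᵥ z := by
  rw [← (h.isSymm hA).dotProduct_mulVec_comm, mulVec_mulVec, mulVec_mulVec, h.self_mul_mul]

theorem mulVec_dotProduct_mul_mulVec (hA : A.IsSymm) (h : IsGroupInverse A X) (z : m → R) :
    X *ᵥ z ⬝ᵥ (A * X) *ᵥ z = z ⬝ᵥ X *ᵥ z := by
  rw [← (h.isSymm hA).dotProduct_mulVec_comm, mulVec_mulVec, ← mul_assoc, h.self_mul_mul]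

end CommRing

section OrderedField

variable {m R : Type*} [Fintype m] [Field R] [LinearOrder R] [IsStrictOrderedRing R]
  {A X : Matrix m m R}

theorem two_mul_sub_le (hA : A.IsSymm) (hpos : ∀ x, 0 ≤ x ⬝ᵥ A *ᵥ x)
    (h : IsGroupInverse A X) (y z : m → R) :
    2 * (y ⬝ᵥ (A * X) *ᵥ z) - y ⬝ᵥ A *ᵥ y ≤ z ⬝ᵥ X *ᵥ z := by
  have hsq := hpos (y - X *ᵥ z)
  have hcross : X *ᵥ z ⬝ᵥ A *ᵥ y = y ⬝ᵥ (A * X) *ᵥ z := by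
    rw [hA.dotProduct_mulVec_comm, dotProduct_comm, mulVec_mulVec]
  rw [mulVec_sub, sub_dotProduct, dotProduct_sub, dotProduct_sub, hcross,
    h.mulVec_dotProduct_mulVec_mulVec hA, mulVec_mulVec] at hsq
  linarith

theorem dotProduct_mulVec_le_of_le {B Y : Matrix m m R} (hA : A.IsSymm)
    (hpos : ∀ x, 0 ≤ x ⬝ᵥ A *ᵥ x) (hB : B.IsSymm) (hX : IsGroupInverse A X)
    (hY : IsGroupInverse B Y) (hP : A * X = B * Y) {c : R} (hc : 0 < c)
    (hAB : ∀ y, y ⬝ᵥ A *ᵥ y ≤ c * (y ⬝ᵥ B *ᵥ y)) (z : m → R) :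
    z ⬝ᵥ Y *ᵥ z ≤ c * (z ⬝ᵥ X *ᵥ z) := by
  set y := Y *ᵥ z
  have hvar := hX.two_mul_sub_le hA hpos (c⁻¹ • y) z
  rw [mulVec_smul, smul_dotProduct, dotProduct_smul, smul_dotProduct, smul_eq_mul, smul_eq_mul,
    smul_eq_mul] at hvar
  calc z ⬝ᵥ Y *ᵥ z = 2 * (y ⬝ᵥ (A * X) *ᵥ z) - y ⬝ᵥ B *ᵥ y := by
        rw [hP, hY.mulVec_dotProduct_mul_mulVec hB, hY.mulVec_dotProduct_mulVec_mulVec hB]; ring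
    _ ≤ 2 * (y ⬝ᵥ (A * X) *ᵥ z) - c⁻¹ * (y ⬝ᵥ A *ᵥ y) := by
        have := hAB y
        rw [← inv_mul_le_iff₀ hc] at this
        linarith
    _ = c * (2 * (c⁻¹ * (y ⬝ᵥ (A * X) *ᵥ z)) - c⁻¹ * (c⁻¹ * (y ⬝ᵥ A *ᵥ y))) := by
        field_simp
    _ ≤ c * (z ⬝ᵥ X *ᵥ z) := mul_le_mul_of_nonneg_left hvar hc.le

end OrderedField

end IsGroupInverse

/-- Spielman's lemma: if `G'` is an `ε`-approximation of a connected network `G`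
(their Laplacian quadratic forms agree up to factor `1+ε`, both Laplacians symmetric PSD
with kernel spanned by the all-ones vector), then the quadratic forms of the group
(Moore-Penrose) inverses of the Laplacians also agree up to factor `1+ε`. -/
theorem group_inverse_eps_approximation {n : ℕ} (ε : ℝ) (hε : 0 < ε)
    (L L' Lp Lp' : Matrix (Fin n) (Fin n) ℝ)
    (hL : L.PosSemidef) (hL' : L'.PosSemidef)
    (hker : ∀ z : Fin n → ℝ, L.mulVec z = 0 ↔ ∃ t : ℝ, z = fun _ => t)
    (hker' : ∀ z : Fin n → ℝ, L'.mulVec z = 0 ↔ ∃ t : ℝ, z = fun _ => t)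
    (hg1 : L * Lp * L = L) (hg2 : Lp * L * Lp = Lp) (hg3 : L * Lp = Lp * L)
    (hg1' : L' * Lp' * L' = L') (hg2' : Lp' * L' * Lp' = Lp') (hg3' : L' * Lp' = Lp' * L')
    (happrox : ∀ z : Fin n → ℝ,
      (1/(1+ε)) * (z ⬝ᵥ L.mulVec z) ≤ z ⬝ᵥ L'.mulVec z ∧
        z ⬝ᵥ L'.mulVec z ≤ (1+ε) * (z ⬝ᵥ L.mulVec z)) :
    ∀ z : Fin n → ℝ,
      (1/(1+ε)) * (z ⬝ᵥ Lp.mulVec z) ≤ z ⬝ᵥ Lp'.mulVec z ∧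
        z ⬝ᵥ Lp'.mulVec z ≤ (1+ε) * (z ⬝ᵥ Lp.mulVec z) := by
  have hc : 0 < 1 + ε := by linarith
  have hX : IsGroupInverse L Lp := ⟨hg1, hg2, hg3⟩
  have hY : IsGroupInverse L' Lp' := ⟨hg1', hg2', hg3'⟩
  have hLs : L.IsSymm := hL.isHermitian
  have hLs' : L'.IsSymm := hL'.isHermitian
  have hpos (x : Fin n → ℝ) : 0 ≤ x ⬝ᵥ L *ᵥ x := by simpa using hL.dotProduct_mulVec_nonneg x
  have hpos' (x : Fin n → ℝ) : 0 ≤ x ⬝ᵥ L' *ᵥ x := by simpa using hL'.dotProduct_mulVec_nonneg x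
  have hP : L * Lp = L' * Lp' :=
    hX.mul_eq_mul_of_ker_eq hLs hLs' hY fun v => (hker v).trans (hker' v).symm
  intro z
  constructor
  · rw [one_div, inv_mul_le_iff₀ hc]
    exact hY.dotProduct_mulVec_le_of_le hLs' hpos' hLs hX hP.symm hc (fun y => (happrox y).2) z
  · refine hX.dotProduct_mulVec_le_of_le hLs hpos hLs' hY hP hc (fun y => ?_) z
    rw [← inv_mul_le_iff₀ hc, ← one_div]
    exact (happrox y).1
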